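/- For n ≥ 4, let M be a perfect matching of FQ_n with M ⊆ M_1 ∪ M_2, M ∩ M_1 ≠ ∅ and M ∩ M_2 ≠ ∅. Then the graph G = FQ_n − M has a vertex u such that every other vertex of G is at distance at most n−1 from u; in particular G has a vertex of eccentricity at most n−1. -/

import Mathlib

open SimpleGraph

def cmpl {n : ℕ} (x : Fin n → Bool) : Fin n → Bool := fun i => !x i

/-- The `n`-dimensional hypercube on vertex set `{0,1}^n`. -/
def Q (n : ℕ) : SimpleGraph (Fin n → Bool) where
  Adj x y := hammingDist x y = 1
  symm := ⟨fun x y h => (hammingDist_comm y x).trans h⟩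
  loopless := ⟨fun x h => by simp [hammingDist_self] at h⟩

/-- The folded hypercube: `Q n` plus all complement edges. -/
def FQ (n : ℕ) : SimpleGraph (Fin n → Bool) where
  Adj x y := hammingDist x y = 1 ∨ (x ≠ y ∧ y = cmpl x)
  symm := by
    refine ⟨?_⟩
    intro x y h
    rcases h with h | ⟨hne, he⟩
    · exact Or.inl ((hammingDist_comm y x).trans h)
    · refine Or.inr ⟨hne.symm, ?_⟩
      subst he; funext i; simp [cmpl]
  loopless := by
    refine ⟨?_⟩
    intro x h
    rcases h with h | ⟨hne, _⟩
    · simp [hammingDist_self] at h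
    · exact hne rfl

/-- The set of hypercube edges in coordinate direction `j`. -/
def Mdir (n : ℕ) (j : Fin n) : Set (Sym2 (Fin n → Bool)) :=
  {e | ∃ x, e = s(x, Function.update x j (!x j))}

/-- The set of complement edges. -/
def M2 (n : ℕ) : Set (Sym2 (Fin n → Bool)) := {e | ∃ x, e = s(x, cmpl x)}

/-- `M` is a perfect matching of `G`: a set of edges of `G` such that every
vertex lies in exactly one edge of `M`. -/
def IsPerfectMatchingSet {V : Type*} (G : SimpleGraph V) (M : Set (Sym2 V)) : Prop :=
  M ⊆ G.edgeSet ∧ ∀ v : V, ∃! e, e ∈ M ∧ v ∈ e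

/-!
Every vertex is matched either by its complement edge or by its edge in direction `j = n - 1`,
so the vertices matched by their complement edge form a set closed under flipping coordinate
`j`. As `M` meets both classes, this set is proper and nonempty, hence contains a vertex `u`
with a neighbour `u' = flipAt i u`, `i ≠ j`, outside it. All edges in directions `i ≠ j`
survive in `FQ n − M`, and so do the `j`-edge at `u` and the complement edge at `u'`. A vertex
`v` in the half of `u` is then reached within that half in at most `n - 1` steps, `cmpl u`
along `u, u', cmpl u', cmpl u`, and any other `v` agrees with `u` in some coordinate `k ≠ j`,
so it is reached by the `j`-edge at `u` followed by at most `n - 2` steps in the other half.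
-/

section Flip

variable {ι : Type*} [DecidableEq ι]

def flipAt (i : ι) (x : ι → Bool) : ι → Bool := Function.update x i (!x i)

@[simp]
lemma flipAt_apply_self (i : ι) (x : ι → Bool) : flipAt i x i = !x i := by
  simp [flipAt]

lemma flipAt_apply_of_ne {i k : ι} (h : k ≠ i) (x : ι → Bool) : flipAt i x k = x k :=
  Function.update_of_ne h _ _

@[simp]
lemma flipAt_flipAt (i : ι) (x : ι → Bool) : flipAt i (flipAt i x) = x := by
  simp [flipAt]

variable [Fintype ι]

lemma hammingDist_flipAt_add_one {x y : ι → Bool} {i : ι} (h : x i ≠ y i) :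
    hammingDist (flipAt i x) y + 1 = hammingDist x y := by
  have hset : ({k | flipAt i x k ≠ y k} : Finset ι) = ({k | x k ≠ y k} : Finset ι).erase i := by
    ext k
    rcases eq_or_ne k i with rfl | hk
    · simpa using h
    · simp [flipAt_apply_of_ne hk, hk]
  rw [hammingDist, hammingDist, hset, Finset.card_erase_add_one (by simpa using h)]

lemma hammingDist_flipAt (i : ι) (x : ι → Bool) : hammingDist x (flipAt i x) = 1 := by
  simpa [eq_comm] using hammingDist_flipAt_add_one (x := x) (y := flipAt i x) (i := i) (by simp)

lemma hammingDist_le_card_sub_of_eqOn {x y : ι → Bool} {s : Finset ι}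
    (h : ∀ i ∈ s, x i = y i) : hammingDist x y ≤ Fintype.card ι - s.card := by
  rw [← Finset.card_compl]
  exact Finset.card_le_card fun k hk => Finset.mem_compl.2 fun hks => by
    simp_all

lemma exists_walk_length_le_hammingDist {G : SimpleGraph (ι → Bool)} {S : Set ι}
    (hG : ∀ x, ∀ i ∈ S, G.Adj x (flipAt i x)) {x y : ι → Bool} (hxy : ∀ i ∉ S, x i = y i) :
    ∃ w : G.Walk x y, w.length ≤ hammingDist x y := by
  induction hk : hammingDist x y generalizing x with
  | zero =>
    obtain rfl := hammingDist_eq_zero.1 hk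
    exact ⟨.nil, by simp⟩
  | succ k ih =>
    obtain ⟨i, hi⟩ := Function.ne_iff.1 (hammingDist_ne_zero.1 (by omega : hammingDist x y ≠ 0))
    have hiS : i ∈ S := by_contra fun hiS => hi (hxy i hiS)
    have hflip : ∀ l ∉ S, flipAt i x l = y l := fun l hl => by
      rw [flipAt_apply_of_ne (ne_of_mem_of_not_mem hiS hl).symm, hxy l hl]
    obtain ⟨w, hw⟩ := ih hflip (by have := hammingDist_flipAt_add_one hi; omega)
    exact ⟨.cons (hG x i hiS) w, by simpa using hw⟩

end Flip

section Hypercube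

variable {n : ℕ}

lemma Q_adj_flipAt (i : Fin n) (x : Fin n → Bool) : (Q n).Adj x (flipAt i x) :=
  hammingDist_flipAt i x

lemma exists_eq_flipAt_of_Q_adj {x y : Fin n → Bool} (h : (Q n).Adj x y) :
    ∃ i, y = flipAt i x := by
  obtain ⟨i, hi⟩ := Finset.card_eq_one.1 (show hammingDist x y = 1 from h)
  have hdiff : ∀ k, x k ≠ y k ↔ k = i := fun k => by
    simpa using Finset.ext_iff.1 hi k
  refine ⟨i, funext fun k => ?_⟩
  rcases eq_or_ne k i with rfl | hk
  · simpa [Bool.eq_not_iff, eq_comm] using (hdiff k).2 rfl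
  · rw [flipAt_apply_of_ne hk]
    exact (not_not.1 (mt (hdiff k).1 hk)).symm

lemma Q_reachable (x y : Fin n → Bool) : (Q n).Reachable x y :=
  let ⟨w, _⟩ := exists_walk_length_le_hammingDist (S := Set.univ)
    (fun x i _ => Q_adj_flipAt i x) (x := x) (y := y) (by simp)
  ⟨w⟩

end Hypercube

namespace IsPerfectMatchingSet

variable {V : Type*} {G : SimpleGraph V} {M : Set (Sym2 V)}

lemma exists_mem (hM : IsPerfectMatchingSet G M) (v : V) : ∃ w, s(v, w) ∈ M := by
  obtain ⟨e, ⟨heM, hve⟩, -⟩ := hM.2 v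
  obtain ⟨w, rfl⟩ := Sym2.mem_iff_exists.1 hve
  exact ⟨w, heM⟩

lemma eq_of_mem (hM : IsPerfectMatchingSet G M) {v a b : V} (ha : s(v, a) ∈ M)
    (hb : s(v, b) ∈ M) : a = b :=
  Sym2.congr_right.1 ((hM.2 v).unique ⟨ha, Sym2.mem_mk_left _ _⟩ ⟨hb, Sym2.mem_mk_left _ _⟩)

end IsPerfectMatchingSet

section FoldedHypercube

variable {n : ℕ}

@[simp]
lemma cmpl_cmpl (x : Fin n → Bool) : cmpl (cmpl x) = x := by
  funext i; simp [cmpl]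

lemma cmpl_flipAt (i : Fin n) (x : Fin n → Bool) : cmpl (flipAt i x) = flipAt i (cmpl x) := by
  funext k
  rcases eq_or_ne k i with rfl | hk
  · simp [cmpl]
  · simp [cmpl, flipAt_apply_of_ne hk]

lemma cmpl_ne_self (hn : 0 < n) (x : Fin n → Bool) : cmpl x ≠ x := fun h => by
  simpa [cmpl] using congrFun h ⟨0, hn⟩

lemma cmpl_ne_flipAt (hn : 1 < n) (i : Fin n) (x : Fin n → Bool) : cmpl x ≠ flipAt i x := by
  intro h
  obtain ⟨k, hk⟩ := Fintype.exists_ne_of_one_lt_card (by simpa using hn) i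
  simpa [cmpl, flipAt_apply_of_ne hk] using congrFun h k

lemma exists_apply_eq_of_ne_cmpl {x y : Fin n → Bool} (h : y ≠ cmpl x) : ∃ k, y k = x k := by
  by_contra! hne
  exact h (funext fun k => by simpa [cmpl, Bool.eq_not_iff] using hne k)

lemma FQ_adj_flipAt (i : Fin n) (x : Fin n → Bool) : (FQ n).Adj x (flipAt i x) :=
  Or.inl (hammingDist_flipAt i x)

lemma FQ_adj_cmpl (hn : 0 < n) (x : Fin n → Bool) : (FQ n).Adj x (cmpl x) :=
  Or.inr ⟨(cmpl_ne_self hn x).symm, rfl⟩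

lemma mem_Mdir_iff {j : Fin n} {a b : Fin n → Bool} : s(a, b) ∈ Mdir n j ↔ b = flipAt j a := by
  refine ⟨?_, fun h => ⟨a, h ▸ rfl⟩⟩
  rintro ⟨x, hx⟩
  rcases Sym2.eq_iff.1 hx with ⟨rfl, rfl⟩ | ⟨rfl, rfl⟩
  · rfl
  · exact (flipAt_flipAt j b).symm

lemma mem_M2_iff {a b : Fin n → Bool} : s(a, b) ∈ M2 n ↔ b = cmpl a := by
  refine ⟨?_, fun h => ⟨a, h ▸ rfl⟩⟩
  rintro ⟨x, hx⟩
  rcases Sym2.eq_iff.1 hx with ⟨rfl, rfl⟩ | ⟨rfl, rfl⟩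
  · rfl
  · exact (cmpl_cmpl b).symm

end FoldedHypercube

section MatchingInTwoClasses

variable {n : ℕ} {j : Fin n} {M : Set (Sym2 (Fin n → Bool))}

lemma cmpl_mem_or_flipAt_mem (hM : IsPerfectMatchingSet (FQ n) M) (hsub : M ⊆ Mdir n j ∪ M2 n)
    (x : Fin n → Bool) : s(x, cmpl x) ∈ M ∨ s(x, flipAt j x) ∈ M := by
  obtain ⟨y, hy⟩ := hM.exists_mem x
  rcases hsub hy with h | h
  · exact .inr (mem_Mdir_iff.1 h ▸ hy)
  · exact .inl (mem_M2_iff.1 h ▸ hy)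

lemma flipAt_not_mem_of_cmpl_mem (hn : 1 < n) (hM : IsPerfectMatchingSet (FQ n) M)
    {x : Fin n → Bool} (hx : s(x, cmpl x) ∈ M) : s(x, flipAt j x) ∉ M :=
  fun h => cmpl_ne_flipAt hn j x (hM.eq_of_mem hx h)

lemma cmpl_mem_flipAt (hn : 1 < n) (hM : IsPerfectMatchingSet (FQ n) M)
    (hsub : M ⊆ Mdir n j ∪ M2 n) {x : Fin n → Bool} (hx : s(x, cmpl x) ∈ M) :
    s(flipAt j x, cmpl (flipAt j x)) ∈ M := by
  refine (cmpl_mem_or_flipAt_mem hM hsub (flipAt j x)).resolve_right fun h => ?_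
  rw [flipAt_flipAt, Sym2.eq_swap] at h
  exact flipAt_not_mem_of_cmpl_mem hn hM hx h

lemma deleteEdges_adj_flipAt_of_ne (hn : 1 < n) (hsub : M ⊆ Mdir n j ∪ M2 n)
    {i : Fin n} (hij : i ≠ j) (x : Fin n → Bool) :
    ((FQ n).deleteEdges M).Adj x (flipAt i x) := by
  refine deleteEdges_adj.2 ⟨FQ_adj_flipAt i x, fun h => ?_⟩
  rcases hsub h with h | h
  · simpa [flipAt_apply_of_ne hij] using congrFun (mem_Mdir_iff.1 h) i
  · exact cmpl_ne_flipAt hn i x (mem_M2_iff.1 h).symm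

lemma deleteEdges_adj_flipAt_of_cmpl_mem (hn : 1 < n) (hM : IsPerfectMatchingSet (FQ n) M)
    {x : Fin n → Bool} (hx : s(x, cmpl x) ∈ M) :
    ((FQ n).deleteEdges M).Adj x (flipAt j x) :=
  deleteEdges_adj.2 ⟨FQ_adj_flipAt j x, flipAt_not_mem_of_cmpl_mem hn hM hx⟩

lemma deleteEdges_adj_cmpl_of_cmpl_not_mem (hn : 0 < n) {x : Fin n → Bool}
    (hx : s(x, cmpl x) ∉ M) : ((FQ n).deleteEdges M).Adj x (cmpl x) :=
  deleteEdges_adj.2 ⟨FQ_adj_cmpl hn x, hx⟩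

lemma exists_walk_length_le_hammingDist_of_apply_eq (hn : 1 < n) (hsub : M ⊆ Mdir n j ∪ M2 n)
    {x y : Fin n → Bool} (hxy : x j = y j) :
    ∃ w : ((FQ n).deleteEdges M).Walk x y, w.length ≤ hammingDist x y :=
  exists_walk_length_le_hammingDist (S := {j}ᶜ)
    (fun x _ hi => deleteEdges_adj_flipAt_of_ne hn hsub hi x) (by simpa using hxy)

lemma exists_cmpl_mem_cmpl_flipAt_not_mem (hn : 1 < n) (hM : IsPerfectMatchingSet (FQ n) M)
    (hsub : M ⊆ Mdir n j ∪ M2 n) (h1 : (M ∩ Mdir n j).Nonempty) (h2 : (M ∩ M2 n).Nonempty) :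
    ∃ u i, i ≠ j ∧ s(u, cmpl u) ∈ M ∧ s(flipAt i u, cmpl (flipAt i u)) ∉ M := by
  obtain ⟨_, hzM, z, rfl⟩ := h2
  obtain ⟨_, hyM, y, rfl⟩ := h1
  obtain ⟨w⟩ := Q_reachable z y
  obtain ⟨d, -, hd, hd'⟩ := w.exists_boundary_dart {x | s(x, cmpl x) ∈ M} hzM
    fun hy => flipAt_not_mem_of_cmpl_mem hn hM hy hyM
  obtain ⟨i, hi⟩ := exists_eq_flipAt_of_Q_adj d.adj
  rw [hi] at hd'
  refine ⟨d.fst, i, ?_, hd, hd'⟩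
  rintro rfl
  exact hd' (cmpl_mem_flipAt hn hM hsub hd)

lemma exists_walk_length_le_of_cmpl_flipAt_not_mem (hn : 4 ≤ n)
    (hM : IsPerfectMatchingSet (FQ n) M) (hsub : M ⊆ Mdir n j ∪ M2 n) {u : Fin n → Bool}
    {i : Fin n} (hij : i ≠ j) (hu : s(u, cmpl u) ∈ M)
    (hiu : s(flipAt i u, cmpl (flipAt i u)) ∉ M) (v : Fin n → Bool) :
    ∃ w : ((FQ n).deleteEdges M).Walk u v, w.length ≤ n - 1 := by
  by_cases hj : u j = v j
  · obtain ⟨w, hw⟩ := exists_walk_length_le_hammingDist_of_apply_eq (by omega) hsub hj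
    have hdist := hammingDist_le_card_sub_of_eqOn (s := {j}) (by simpa using hj)
    rw [Fintype.card_fin, Finset.card_singleton] at hdist
    exact ⟨w, hw.trans hdist⟩
  by_cases hv : v = cmpl u
  · -- the path `u, flipAt i u, cmpl (flipAt i u) = flipAt i (cmpl u), cmpl u`
    subst hv
    have hback := (deleteEdges_adj_flipAt_of_ne (M := M) (by omega) hsub hij (cmpl u)).symm
    rw [← cmpl_flipAt] at hback
    exact ⟨.cons (deleteEdges_adj_flipAt_of_ne (by omega) hsub hij u)
      (.cons (deleteEdges_adj_cmpl_of_cmpl_not_mem (by omega) hiu) (.cons hback .nil)),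
      by simp only [Walk.length_cons, Walk.length_nil]; omega⟩
  · obtain ⟨k, hk⟩ := exists_apply_eq_of_ne_cmpl hv
    have hvj : v j = !u j := by simpa [Bool.eq_not_iff, eq_comm] using hj
    have hkj : k ≠ j := by rintro rfl; simp [hvj] at hk
    obtain ⟨w, hw⟩ := exists_walk_length_le_hammingDist_of_apply_eq (M := M) (by omega) hsub
      (x := flipAt j u) (y := v) (by simp [hvj])
    have hdist := hammingDist_le_card_sub_of_eqOn (x := flipAt j u) (y := v) (s := {k, j})
      (by simp [flipAt_apply_of_ne hkj, hk, hvj])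
    rw [Fintype.card_fin, Finset.card_pair hkj] at hdist
    exact ⟨.cons (deleteEdges_adj_flipAt_of_cmpl_mem (by omega) hM hu) w,
      by rw [Walk.length_cons]; omega⟩

end MatchingInTwoClasses

/-- If `M ⊆ M₁ ∪ M₂` is a perfect matching of `FQ n` meeting both `M₁` and `M₂`, then
`FQ n − M` has a vertex from which every vertex is at distance at most `n - 1`. -/
theorem stmt10 (n : ℕ) (hn : 4 ≤ n) (M : Set (Sym2 (Fin n → Bool)))
    (hM : IsPerfectMatchingSet (FQ n) M)
    (hsub : M ⊆ Mdir n ⟨n - 1, by omega⟩ ∪ M2 n)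
    (h1 : (M ∩ (Mdir n ⟨n - 1, by omega⟩)).Nonempty) (h2 : (M ∩ M2 n).Nonempty) :
    ∃ u : Fin n → Bool, ∀ v : Fin n → Bool,
      ((FQ n).deleteEdges M).Reachable u v ∧ ((FQ n).deleteEdges M).dist u v ≤ n - 1 := by
  obtain ⟨u, i, hij, hu, hiu⟩ := exists_cmpl_mem_cmpl_flipAt_not_mem (by omega) hM hsub h1 h2
  refine ⟨u, fun v => ?_⟩
  obtain ⟨w, hw⟩ := exists_walk_length_le_of_cmpl_flipAt_not_mem hn hM hsub hij hu hiu v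
  exact ⟨⟨w⟩, (dist_le w).trans hw⟩
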